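/- Let M > 0, let I ⊆ ℝ be an open interval, and let a : I → (0, ∞) and r₁ : I → (0, ∞) be differentiable functions satisfying 1 − 2M/r₁(t) + r₁(t)²/a(t)² = 0 for all t ∈ I. Then, with H = a′/a, for all t ∈ I: r₁′(t) = 2H(t)·r₁(t)³ / (a(t)² + 3r₁(t)²). -/

import Mathlib

/-!
Multiplying the root equation `κ = 0` by `r₁ a²` turns it into the polynomial identity
`r₁ a² - 2M a² + r₁³ = 0`, which holds on the open set `I` and can therefore be differentiated
implicitly: `r₁' (a² + 3 r₁²) + 2 a a' (r₁ - 2M) = 0`. Eliminating `r₁ - 2M = -r₁³ / a²` with the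
identity itself gives the formula.
-/

open Filter Topology

namespace McVittie

noncomputable def kappa (M a r : ℝ) : ℝ := 1 - 2 * M / r + r ^ 2 / a ^ 2

def clearedKappa (M a r : ℝ) : ℝ := r * a ^ 2 - 2 * M * a ^ 2 + r ^ 3

lemma ne_zero_of_kappa_eq_zero {M a r : ℝ} (h : kappa M a r = 0) : r ≠ 0 := by
  rintro rfl
  simp [kappa] at h

lemma clearedKappa_eq_zero_of_kappa_eq_zero {M a r : ℝ} (ha : a ≠ 0) (h : kappa M a r = 0) :
    clearedKappa M a r = 0 := by
  have hr := ne_zero_of_kappa_eq_zero h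
  have hcleared : clearedKappa M a r = r * a ^ 2 * kappa M a r := by
    unfold clearedKappa kappa
    field_simp
  rw [hcleared, h, mul_zero]

lemma hasDerivAt_clearedKappa (M : ℝ) {a r : ℝ → ℝ} {a' r' t : ℝ}
    (ha : HasDerivAt a a' t) (hr : HasDerivAt r r' t) :
    HasDerivAt (fun s ↦ clearedKappa M (a s) (r s))
      (r' * (a t ^ 2 + 3 * r t ^ 2) + 2 * a t * a' * (r t - 2 * M)) t := by
  refine (((hr.mul (ha.pow 2)).sub ((ha.pow 2).const_mul (2 * M))).add (hr.pow 3)).congr_deriv ?_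
  simp only [Pi.pow_apply, Nat.cast_ofNat]
  ring

theorem hasDerivAt_eq_of_clearedKappa_eventually_eq_zero {M : ℝ} {a r : ℝ → ℝ} {a' r' t : ℝ}
    (ha : HasDerivAt a a' t) (hr : HasDerivAt r r' t) (hat : a t ≠ 0)
    (h : ∀ᶠ s in 𝓝 t, clearedKappa M (a s) (r s) = 0) :
    r' = 2 * (a' / a t) * r t ^ 3 / (a t ^ 2 + 3 * r t ^ 2) := by
  have hderiv : r' * (a t ^ 2 + 3 * r t ^ 2) + 2 * a t * a' * (r t - 2 * M) = 0 :=
    (hasDerivAt_clearedKappa M ha hr).unique ((hasDerivAt_const t 0).congr_of_eventuallyEq h)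
  have hroot : clearedKappa M (a t) (r t) = 0 := h.self_of_nhds
  unfold clearedKappa at hroot
  have hden : a t ^ 2 + 3 * r t ^ 2 ≠ 0 := by positivity
  field_simp
  linear_combination a t * hderiv - 2 * a' * hroot

end McVittie

theorem mcvittie_open_boundary_derivative_general (M : ℝ)
    (I : Set ℝ) (hIopen : IsOpen I)
    (a a' r₁ r₁' : ℝ → ℝ)
    (ha_pos : ∀ t ∈ I, 0 < a t)
    (ha' : ∀ t ∈ I, HasDerivAt a (a' t) t)
    (hr₁' : ∀ t ∈ I, HasDerivAt r₁ (r₁' t) t)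
    (hroot : ∀ t ∈ I, 1 - 2 * M / r₁ t + (r₁ t) ^ 2 / (a t) ^ 2 = 0)
    (H : ℝ → ℝ) (hH : ∀ t ∈ I, H t = a' t / a t) :
    ∀ t ∈ I, r₁' t = 2 * H t * (r₁ t) ^ 3 / ((a t) ^ 2 + 3 * (r₁ t) ^ 2) := by
  intro t ht
  have hcleared : ∀ᶠ s in 𝓝 t, McVittie.clearedKappa M (a s) (r₁ s) = 0 :=
    eventually_of_mem (hIopen.mem_nhds ht) fun s hs ↦
      McVittie.clearedKappa_eq_zero_of_kappa_eq_zero (ha_pos s hs).ne' (hroot s hs)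
  rw [hH t ht]
  exact McVittie.hasDerivAt_eq_of_clearedKappa_eventually_eq_zero (ha' t ht) (hr₁' t ht)
    (ha_pos t ht).ne' hcleared

/-- The boundary radius `r₁(t)` of the allowed region of the open
(K = -1) McVittie spacetime, i.e. the positive root of `1 - 2M/r + r²/a(t)² = 0`,
satisfies `r₁' = 2H·r₁³/(a² + 3r₁²)` where `H = a'/a`. -/
theorem mcvittie_open_boundary_derivative (M : ℝ) (hM : 0 < M)
    (I : Set ℝ) (hIopen : IsOpen I) (hIconn : I.OrdConnected)
    (a a' r₁ r₁' : ℝ → ℝ)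
    (ha_pos : ∀ t ∈ I, 0 < a t)
    (hr₁_pos : ∀ t ∈ I, 0 < r₁ t)
    (ha' : ∀ t ∈ I, HasDerivAt a (a' t) t)
    (hr₁' : ∀ t ∈ I, HasDerivAt r₁ (r₁' t) t)
    (hroot : ∀ t ∈ I, 1 - 2 * M / r₁ t + (r₁ t) ^ 2 / (a t) ^ 2 = 0)
    (H : ℝ → ℝ) (hH : ∀ t ∈ I, H t = a' t / a t) :
    ∀ t ∈ I, r₁' t = 2 * H t * (r₁ t) ^ 3 / ((a t) ^ 2 + 3 * (r₁ t) ^ 2) :=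
  mcvittie_open_boundary_derivative_general M I hIopen a a' r₁ r₁' ha_pos ha' hr₁' hroot H hH
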